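/- arXiv:2501.07422 — 3 statements merged into one kernel-verified Lean document; each statement's English description precedes it below -/
import Mathlib

section
/- For real numbers p ∈ [0,1], q = 1-p, and vectors r₁, r₂ ∈ ℝ³, the matrix ΔᴴΔ, where Δ = pρ(r₁) - qρ(r₂) is the Helstrom matrix, has eigenvalues (1/4)(‖w‖ + |p-q|)² and (1/4)(‖w‖ - |p-q|)², where w = p r₁ - q r₂. -/
noncomputable section

open Matrix Complex

/-- Pauli matrix σ_x. -/
def σx : Matrix (Fin 2) (Fin 2) ℂ := !![0, 1; 1, 0]
/-- Pauli matrix σ_y. -/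
def σy : Matrix (Fin 2) (Fin 2) ℂ := !![0, -Complex.I; Complex.I, 0]
/-- Pauli matrix σ_z. -/
def σz : Matrix (Fin 2) (Fin 2) ℂ := !![1, 0; 0, -1]

/-- The qubit operator with Bloch vector `r`: ρ(r) = (1/2)(I + x σx + y σy + z σz). -/
def blochRho (r : EuclideanSpace ℝ (Fin 3)) : Matrix (Fin 2) (Fin 2) ℂ :=
  (1 / 2 : ℂ) • ((1 : Matrix (Fin 2) (Fin 2) ℂ)
    + (r 0 : ℂ) • σx + (r 1 : ℂ) • σy + (r 2 : ℂ) • σz)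

lemma key_det (μ A B C T N S : ℂ) (hN : N^2 = A^2+B^2+C^2) (hS : S^2 = T^2) :
    (μ - (((T+C)^2+A^2+B^2)/4)) * (μ - (((T-C)^2+A^2+B^2)/4))
      - (T*(A - Complex.I*B)/2) * (T*(A + Complex.I*B)/2)
    = (μ - (N+S)^2/4) * (μ - (N-S)^2/4) := by
  linear_combination (μ/2 - (N^2 - S^2 + A^2+B^2+C^2 - T^2)/16) * hN
    + (μ/2 + (N^2 - S^2 + A^2+B^2+C^2 - T^2)/16) * hS
    + (T^2*B^2/4) * Complex.I_sq

lemma mul_helper (t a b c : ℂ) :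
    (!![(t+c)/2, (a - Complex.I*b)/2; (a + Complex.I*b)/2, (t-c)/2] :
        Matrix (Fin 2) (Fin 2) ℂ) *
      !![(t+c)/2, (a - Complex.I*b)/2; (a + Complex.I*b)/2, (t-c)/2]
    = !![((t+c)^2 + a^2 + b^2)/4, t*(a - Complex.I*b)/2;
         t*(a + Complex.I*b)/2, ((t-c)^2 + a^2 + b^2)/4] := by
  rw [Matrix.mul_fin_two]
  ext i j
  fin_cases i <;> fin_cases j <;> simp
  · linear_combination (-(b^2)/4) * Complex.I_sq
  · ring
  · ring
  · linear_combination (-(b^2)/4) * Complex.I_sq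

/-- For p ∈ [0,1], q = 1-p, the matrix ΔᴴΔ, with Δ = pρ(r₁) - qρ(r₂) the Helstrom matrix,
has eigenvalues (1/4)(‖w‖ + |p-q|)² and (1/4)(‖w‖ - |p-q|)², where w = p r₁ - q r₂. -/
theorem helstrom_conjTranspose_mul_self_eigenvalues
    (p : ℝ) (hp : p ∈ Set.Icc (0 : ℝ) 1) (q : ℝ) (hq : q = 1 - p)
    (r₁ r₂ : EuclideanSpace ℝ (Fin 3)) :
    let Δ : Matrix (Fin 2) (Fin 2) ℂ := (p : ℂ) • blochRho r₁ - (q : ℂ) • blochRho r₂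
    let w : EuclideanSpace ℝ (Fin 3) := p • r₁ - q • r₂
    spectrum ℂ (Δᴴ * Δ) =
      {(((‖w‖ + |p - q|) ^ 2 / 4 : ℝ) : ℂ), (((‖w‖ - |p - q|) ^ 2 / 4 : ℝ) : ℂ)} := by
  intro Δ w
  set a : ℝ := p * r₁ 0 - q * r₂ 0 with ha
  set b : ℝ := p * r₁ 1 - q * r₂ 1 with hb
  set c : ℝ := p * r₁ 2 - q * r₂ 2 with hc
  have hw : ∀ i, w i = ![a, b, c] i := by
    intro i; fin_cases i <;> simp [w, ha, hb, hc]
  have hNr : ‖w‖ ^ 2 = a^2 + b^2 + c^2 := by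
    rw [EuclideanSpace.norm_eq, Real.sq_sqrt (by positivity)]
    simp [Fin.sum_univ_three, hw 0, hw 1, hw 2, Real.norm_eq_abs, sq_abs]
  have hNc : ((‖w‖ : ℝ) : ℂ)^2 = (a:ℂ)^2 + (b:ℂ)^2 + (c:ℂ)^2 := by exact_mod_cast hNr
  have hSc : ((|p - q| : ℝ) : ℂ)^2 = ((p:ℂ) - q)^2 := by
    push_cast
    exact_mod_cast _root_.sq_abs (p - q)
  have hΔ : Δ = !![(((p:ℂ)-q) + c)/2, ((a:ℂ) - Complex.I*b)/2;
                   ((a:ℂ) + Complex.I*b)/2, (((p:ℂ)-q) - c)/2] := by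
    show (p : ℂ) • blochRho r₁ - (q : ℂ) • blochRho r₂ = _
    ext i j
    fin_cases i <;> fin_cases j <;>
      simp [blochRho, σx, σy, σz, Matrix.one_apply, ha, hb, hc] <;> push_cast <;> ring
  have hH : Δᴴ = Δ := by
    rw [hΔ]
    ext i j
    fin_cases i <;> fin_cases j <;>
      simp [Matrix.conjTranspose_apply, map_div₀, map_add, map_sub, _root_.map_mul,
        Complex.conj_ofReal, Complex.conj_I] <;> ring
  have hM : Δᴴ * Δ = !![((((p:ℂ)-q)+c)^2 + a^2 + b^2)/4, ((p:ℂ)-q)*((a:ℂ) - Complex.I*b)/2;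
                        ((p:ℂ)-q)*((a:ℂ) + Complex.I*b)/2, ((((p:ℂ)-q)-c)^2 + a^2 + b^2)/4] := by
    rw [hH, hΔ]; exact mul_helper _ _ _ _
  have hdet : ∀ μ : ℂ, (algebraMap ℂ (Matrix (Fin 2) (Fin 2) ℂ) μ - Δᴴ * Δ).det
      = (μ - (((‖w‖ + |p - q|) ^ 2 / 4 : ℝ) : ℂ)) *
        (μ - (((‖w‖ - |p - q|) ^ 2 / 4 : ℝ) : ℂ)) := by
    intro μ
    have hsub : algebraMap ℂ (Matrix (Fin 2) (Fin 2) ℂ) μ - Δᴴ * Δ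
        = !![μ - ((((p:ℂ)-q)+c)^2 + a^2 + b^2)/4, -(((p:ℂ)-q)*((a:ℂ) - Complex.I*b)/2);
             -(((p:ℂ)-q)*((a:ℂ) + Complex.I*b)/2), μ - ((((p:ℂ)-q)-c)^2 + a^2 + b^2)/4] := by
      rw [hM]
      ext i j
      fin_cases i <;> fin_cases j <;> simp [Matrix.algebraMap_matrix_apply]
    rw [hsub, Matrix.det_fin_two_of]
    have hkey := key_det μ (a:ℂ) (b:ℂ) (c:ℂ) ((p:ℂ)-q) ((‖w‖ : ℝ) : ℂ) ((|p - q| : ℝ) : ℂ)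
      hNc hSc
    push_cast
    linear_combination hkey
  ext μ
  rw [Set.mem_insert_iff, Set.mem_singleton_iff, spectrum.mem_iff,
    Matrix.isUnit_iff_isUnit_det, hdet μ, isUnit_iff_ne_zero, not_ne_iff, mul_eq_zero,
    sub_eq_zero, sub_eq_zero]
end
end

section
/- For real numbers p ∈ [0,1], q = 1-p, and vectors r₁, r₂ ∈ ℝ³, the trace norm of the Helstrom matrix Δ = pρ(r₁) - qρ(r₂) satisfies ‖Δ‖₁ = max(‖w‖, |p-q|), where w = p r₁ - q r₂; that is, ‖Δ‖₁ = ‖w‖ if ‖w‖ ≥ |p-q| and ‖Δ‖₁ = |p-q| otherwise (Eq. (9) of the paper). -/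
noncomputable section

open Matrix Complex
open scoped ComplexOrder

/-- The trace norm ‖A‖₁ = Tr √(AᴴA). -/
def traceNorm (A : Matrix (Fin 2) (Fin 2) ℂ) : ℝ :=
  (let hA := Matrix.posSemidef_conjTranspose_mul_self A
   (hA.1.eigenvectorUnitary : Matrix (Fin 2) (Fin 2) ℂ) *
     diagonal (((↑) : ℝ → ℂ) ∘ Real.sqrt ∘ hA.1.eigenvalues) *
     (star hA.1.eigenvectorUnitary : Matrix (Fin 2) (Fin 2) ℂ)).trace.re

/-!
Write `Δ = ½((p - q) I + w·σ)`. A matrix `a I + u·σ` is Hermitian with trace `2a` and determinant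
`a² - ‖u‖²`, and the Pauli relations give `(a I + u·σ)² = (a² + ‖u‖²) I + 2a u·σ`. Hence for
`m = max ‖u‖ |a|` the matrix `m I + (a / m) u·σ` is positive semidefinite (as `|a| ‖u‖ ≤ m²`) and
squares to `(a I + u·σ)²` (as `m² ∈ {a², ‖u‖²}`), so it is `√(ΔᴴΔ)` and the trace norm is `2m`.
-/

def blochMatrix (a : ℝ) (u : EuclideanSpace ℝ (Fin 3)) : Matrix (Fin 2) (Fin 2) ℂ :=
  (a : ℂ) • 1 + (u 0 : ℂ) • σx + (u 1 : ℂ) • σy + (u 2 : ℂ) • σz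

lemma blochMatrix_eq_of (a : ℝ) (u : EuclideanSpace ℝ (Fin 3)) :
    blochMatrix a u = !![(a + u 2 : ℂ), u 0 - u 1 * I; u 0 + u 1 * I, a - u 2] := by
  ext i j
  fin_cases i <;> fin_cases j <;> simp [blochMatrix, σx, σy, σz] <;> ring

lemma EuclideanSpace.norm_sq_eq_fin_three (u : EuclideanSpace ℝ (Fin 3)) :
    ‖u‖ ^ 2 = u 0 ^ 2 + u 1 ^ 2 + u 2 ^ 2 := by
  simp [EuclideanSpace.norm_sq_eq, Fin.sum_univ_three]

lemma isHermitian_blochMatrix (a : ℝ) (u : EuclideanSpace ℝ (Fin 3)) :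
    (blochMatrix a u).IsHermitian := by
  rw [blochMatrix_eq_of]
  ext i j
  fin_cases i <;> fin_cases j <;> simp [Complex.ext_iff]

lemma trace_blochMatrix (a : ℝ) (u : EuclideanSpace ℝ (Fin 3)) :
    (blochMatrix a u).trace = (2 * a : ℝ) := by
  rw [blochMatrix_eq_of, trace_fin_two]
  simp
  ring

lemma det_blochMatrix (a : ℝ) (u : EuclideanSpace ℝ (Fin 3)) :
    (blochMatrix a u).det = (a ^ 2 - ‖u‖ ^ 2 : ℝ) := by
  rw [blochMatrix_eq_of, det_fin_two_of, EuclideanSpace.norm_sq_eq_fin_three]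
  push_cast
  linear_combination (u 1 : ℂ) ^ 2 * I_sq

lemma blochMatrix_sq (a : ℝ) (u : EuclideanSpace ℝ (Fin 3)) :
    blochMatrix a u ^ 2 = blochMatrix (a ^ 2 + ‖u‖ ^ 2) ((2 * a) • u) := by
  rw [EuclideanSpace.norm_sq_eq_fin_three]
  simp only [blochMatrix_eq_of, sq]
  ext i j
  fin_cases i <;> fin_cases j <;> simp [Matrix.mul_apply]
  · linear_combination (-(u 1 : ℂ) ^ 2) * I_sq
  · ring
  · ring
  · linear_combination (-(u 1 : ℂ) ^ 2) * I_sq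

lemma smul_blochMatrix (t a : ℝ) (u : EuclideanSpace ℝ (Fin 3)) :
    (t : ℂ) • blochMatrix a u = blochMatrix (t * a) (t • u) := by
  simp only [blochMatrix, smul_add, smul_smul, PiLp.smul_apply, smul_eq_mul]
  push_cast
  rfl

lemma blochMatrix_sub (a b : ℝ) (u v : EuclideanSpace ℝ (Fin 3)) :
    blochMatrix a u - blochMatrix b v = blochMatrix (a - b) (u - v) := by
  simp only [blochMatrix, PiLp.sub_apply]
  push_cast
  module

lemma blochRho_eq_smul_blochMatrix (r : EuclideanSpace ℝ (Fin 3)) :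
    blochRho r = ((1 / 2 : ℝ) : ℂ) • blochMatrix 1 r := by
  simp [blochRho, blochMatrix]

lemma Matrix.PosSemidef.of_trace_nonneg_of_det_nonneg {A : Matrix (Fin 2) (Fin 2) ℂ}
    (hA : A.IsHermitian) (htr : 0 ≤ A.trace) (hdet : 0 ≤ A.det) : A.PosSemidef := by
  rw [hA.posSemidef_iff_eigenvalues_nonneg]
  rw [hA.trace_eq_sum_eigenvalues, Fin.sum_univ_two] at htr
  rw [hA.det_eq_prod_eigenvalues, Fin.prod_univ_two] at hdet
  norm_cast at htr hdet
  rw [RCLike.ofReal_nonneg] at htr hdet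
  intro i
  fin_cases i <;> simp <;> nlinarith

lemma blochMatrix_posSemidef {a : ℝ} {u : EuclideanSpace ℝ (Fin 3)} (h : ‖u‖ ≤ a) :
    (blochMatrix a u).PosSemidef := by
  have ha : 0 ≤ a := (norm_nonneg u).trans h
  refine .of_trace_nonneg_of_det_nonneg (isHermitian_blochMatrix a u) ?_ ?_
  · rw [trace_blochMatrix, Complex.zero_le_real]
    positivity
  · rw [det_blochMatrix, Complex.zero_le_real, sub_nonneg]
    gcongr

section

open scoped MatrixOrder

lemma traceNorm_eq_re_trace_sqrt (A : Matrix (Fin 2) (Fin 2) ℂ) :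
    traceNorm A = (CFC.sqrt (Aᴴ * A)).trace.re := by
  have hA := posSemidef_conjTranspose_mul_self A
  rw [CFC.sqrt_eq_cfc, cfc_nnreal_eq_real _ _ hA.nonneg, hA.1.cfc_eq]
  simp only [IsHermitian.cfc, Unitary.conjStarAlgAut_apply]
  unfold traceNorm Real.sqrt
  rfl

lemma traceNorm_blochMatrix (a : ℝ) (u : EuclideanSpace ℝ (Fin 3)) :
    traceNorm (blochMatrix a u) = 2 * max ‖u‖ |a| := by
  set m := max ‖u‖ |a|
  obtain hm | hm := (le_max_of_le_left (norm_nonneg u) : 0 ≤ m).eq_or_lt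
  · have hu : u = 0 := norm_eq_zero.mp (le_antisymm (hm ▸ le_max_left _ _) (norm_nonneg u))
    have ha : a = 0 := abs_eq_zero.mp (le_antisymm (hm ▸ le_max_right _ _) (abs_nonneg a))
    simp [m, hu, ha, traceNorm_eq_re_trace_sqrt, blochMatrix]
  have hm0 : m ≠ 0 := hm.ne'
  set S := blochMatrix m ((a / m) • u)
  have hS : S.PosSemidef := by
    refine blochMatrix_posSemidef ?_
    rw [norm_smul, Real.norm_eq_abs, abs_div, abs_of_pos hm, div_mul_eq_mul_div, div_le_iff₀ hm]
    exact mul_le_mul (le_max_right _ _) (le_max_left _ _) (norm_nonneg u) hm.le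
  have hsq : S ^ 2 = (blochMatrix a u)ᴴ * blochMatrix a u := by
    have hm2 : (m ^ 2 - a ^ 2) * (m ^ 2 - ‖u‖ ^ 2) = 0 := by
      rcases max_choice ‖u‖ |a| with h | h <;> simp [m, h, sq_abs]
    rw [(isHermitian_blochMatrix a u).eq, ← sq, blochMatrix_sq, blochMatrix_sq, norm_smul,
      smul_smul, Real.norm_eq_abs, mul_pow, sq_abs]
    congr 1
    · field_simp
      linear_combination hm2
    · rw [show 2 * m * (a / m) = 2 * a by field_simp]
  rw [traceNorm_eq_re_trace_sqrt, ← hsq, CFC.sqrt_sq S hS.nonneg, trace_blochMatrix, ofReal_re]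

end

theorem helstrom_traceNorm_eq_max_general
    (p : ℝ) (q : ℝ)
    (r₁ r₂ : EuclideanSpace ℝ (Fin 3)) :
    traceNorm ((p : ℂ) • blochRho r₁ - (q : ℂ) • blochRho r₂)
      = max ‖p • r₁ - q • r₂‖ |p - q| := by
  have hΔ : (p : ℂ) • blochRho r₁ - (q : ℂ) • blochRho r₂
      = blochMatrix ((p - q) / 2) ((1 / 2 : ℝ) • (p • r₁ - q • r₂)) := by
    simp only [blochRho_eq_smul_blochMatrix, smul_blochMatrix, blochMatrix_sub]
    congr 1
    · ring
    · module
  rw [hΔ, traceNorm_blochMatrix, mul_max_of_nonneg _ _ zero_le_two, norm_smul, abs_div]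
  norm_num
  ring_nf

/-- For p ∈ [0,1], q = 1-p, the trace norm of the Helstrom matrix Δ = pρ(r₁) - qρ(r₂)
satisfies ‖Δ‖₁ = max(‖w‖, |p-q|), where w = p r₁ - q r₂. -/
theorem helstrom_traceNorm_eq_max
    (p : ℝ) (hp : p ∈ Set.Icc (0 : ℝ) 1) (q : ℝ) (hq : q = 1 - p)
    (r₁ r₂ : EuclideanSpace ℝ (Fin 3)) :
    traceNorm ((p : ℂ) • blochRho r₁ - (q : ℂ) • blochRho r₂)
      = max ‖p • r₁ - q • r₂‖ |p - q| :=
  helstrom_traceNorm_eq_max_general p q r₁ r₂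
end
end

section
/- (False negative of the GBLP test for isometric decay) Consider the unital dynamics T(t) = e^{-γt}·I on ℝ³ with γ > 0. Let p ∈ [0,1], q = 1-p, and let r₁ ∈ ℝ³ with 0 < ‖r₁‖ ≤ |p-q| and r₂ = -r₁. Then for all t ≥ 0 the generalized trace distance of the evolved pair satisfies D(t) = max(‖e^{-γt}(p r₁ - q r₂)‖, |p-q|) = max(e^{-γt}‖r₁‖, |p-q|) = |p-q|, i.e. D is constant in t, even though the evolved Bloch vectors t ↦ e^{-γt}r₁ and t ↦ e^{-γt}r₂ are non-constant. -/
noncomputable section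

/-- (False negative of the GBLP test for isometric decay.) For the unital dynamics
T(t) = e^{-γt}·I with γ > 0, bias p ∈ [0,1], q = 1-p, and a pair r₂ = -r₁ with
0 < ‖r₁‖ ≤ |p-q|, the generalized trace distance of the evolved pair,
max(‖e^{-γt}(p r₁ - q r₂)‖, |p-q|) = max(e^{-γt}‖r₁‖, |p-q|), is identically |p-q|
for all t ≥ 0, even though the evolved Bloch vectors are non-constant in t. -/
theorem gblp_false_negative_isometric_decay
    (γ : ℝ) (hγ : 0 < γ) (p : ℝ) (hp : p ∈ Set.Icc (0 : ℝ) 1) (q : ℝ) (hq : q = 1 - p)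
    (r₁ r₂ : EuclideanSpace ℝ (Fin 3)) (hr₁pos : 0 < ‖r₁‖) (hr₁le : ‖r₁‖ ≤ |p - q|)
    (hr₂ : r₂ = -r₁) :
    (∀ t : ℝ, 0 ≤ t →
      max ‖Real.exp (-γ * t) • (p • r₁ - q • r₂)‖ |p - q|
          = max (Real.exp (-γ * t) * ‖r₁‖) |p - q|
      ∧ max ‖Real.exp (-γ * t) • (p • r₁ - q • r₂)‖ |p - q| = |p - q|)
    ∧ (∃ t₁ t₂ : ℝ, 0 ≤ t₁ ∧ 0 ≤ t₂ ∧
        Real.exp (-γ * t₁) • r₁ ≠ Real.exp (-γ * t₂) • r₁)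
    ∧ (∃ t₁ t₂ : ℝ, 0 ≤ t₁ ∧ 0 ≤ t₂ ∧
        Real.exp (-γ * t₁) • r₂ ≠ Real.exp (-γ * t₂) • r₂) := by

  have hne : r₁ ≠ 0 := fun h => by simp [h] at hr₁pos
  have hkey : p • r₁ - q • r₂ = r₁ := by
    rw [hr₂, smul_neg, sub_neg_eq_add, ← add_smul]
    have : p + q = 1 := by rw [hq]; ring
    rw [this, one_smul]
  have hnonconst : ∀ r : EuclideanSpace ℝ (Fin 3), r ≠ 0 →
      ∃ t₁ t₂ : ℝ, 0 ≤ t₁ ∧ 0 ≤ t₂ ∧ Real.exp (-γ * t₁) • r ≠ Real.exp (-γ * t₂) • r := by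
    intro r hr
    refine ⟨0, 1, le_refl 0, zero_le_one, fun h => ?_⟩
    have := smul_left_injective ℝ hr h
    simp only [mul_zero, neg_zero, Real.exp_zero, mul_one] at this
    have h2 : Real.exp (-γ) < 1 := Real.exp_lt_one_iff.mpr (by linarith)
    rw [← this] at h2; exact lt_irrefl _ h2
  refine ⟨fun t ht => ?_, hnonconst r₁ hne, hnonconst r₂ (by simp [hr₂, hne])⟩
  have hexp : Real.exp (-γ * t) ≤ 1 := Real.exp_le_one_iff.mpr (by nlinarith)
  have hexppos : 0 < Real.exp (-γ * t) := Real.exp_pos _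
  have hn : ‖Real.exp (-γ * t) • (p • r₁ - q • r₂)‖ = Real.exp (-γ * t) * ‖r₁‖ := by
    rw [hkey, norm_smul, Real.norm_eq_abs, abs_of_pos hexppos]
  have hle : Real.exp (-γ * t) * ‖r₁‖ ≤ |p - q| :=
    le_trans (by nlinarith) hr₁le
  rw [hn]
  exact ⟨rfl, max_eq_right hle⟩
end
end
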